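/- arXiv:1405.5415 — 2 statements merged into one kernel-verified Lean document; each statement's English description precedes it below -/
import Mathlib

section
/- Let F(φ) = (1/4)(φ² − 1)² and f̃(φ, ψ) = φ³ − ψ. Then for all real φ, ψ: f̃(φ,ψ)(φ−ψ) ≥ F(φ) − F(ψ) + (1/2)(φ−ψ)². -/
/-- Convex-splitting stability inequality for the double-well potential. -/
theorem stmt_2 (F : ℝ → ℝ) (hF : ∀ φ, F φ = (1/4) * (φ^2 - 1)^2)
    (ftil : ℝ → ℝ → ℝ) (hf : ∀ φ ψ, ftil φ ψ = φ^3 - ψ) :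
    ∀ φ ψ : ℝ, ftil φ ψ * (φ - ψ) ≥ F φ - F ψ + (1/2) * (φ - ψ)^2 := by
  intro φ ψ
  rw [hF, hF, hf]
  nlinarith [sq_nonneg (φ - ψ), sq_nonneg (φ + ψ), sq_nonneg (φ^2 - ψ^2), sq_nonneg (φ^2 + φ*ψ + ψ^2 - 1), sq_nonneg ((φ - ψ)*(φ + ψ)), sq_nonneg (φ*(φ-ψ))]
end

section
/- Let ε > 0, c ∈ ℝ, and Ω ⊂ ℝᵈ (d ≤ 3) a bounded Lipschitz domain. Define for ψ ∈ Ḣ¹(Ω) the functional ⟨S(ψ), ψ⟩ = ε⁻¹∫_Ω (ψ+c)³ψ dx + ε∫_Ω |∇ψ|² dx. Then there exist constants C₁ = C₁(ε) > 0 and C₂ = C₂(ε, |Ω|, |c|) ≥ 0 such that ⟨S(ψ), ψ⟩ ≥ C₁‖ψ‖²_{H¹(Ω)} − C₂ for all ψ ∈ Ḣ¹(Ω). In particular ⟨S(ψ),ψ⟩/‖ψ‖_{H¹} → +∞ as ‖ψ‖_{H¹} → ∞. -/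
open MeasureTheory

/-! With `u = a + c`, the polynomial `(a + c)³ a = u⁴ - c u³` is bounded below by `-c⁴/4`,
so the nonlinear part of `⟨S(ψ), ψ⟩` costs at most a constant times `|Ω|`, while by
Poincaré–Wirtinger the gradient term alone controls the full `H¹` norm of a zero-mean `ψ`. -/

theorem neg_div_four_le_add_pow_three_mul (a c : ℝ) : -(c ^ 4 / 4) ≤ (a + c) ^ 3 * a := by
  nlinarith [sq_nonneg ((a + c) ^ 2 - c * (a + c)), sq_nonneg ((a + c) ^ 2 - c ^ 2),
    sq_nonneg (a + c)]

theorem neg_div_four_mul_measureReal_le_setIntegral_add_pow_three_mul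
    {α : Type*} [MeasurableSpace α] {μ : Measure α} {s : Set α} (hs : μ s < ⊤)
    (f : α → ℝ) (c : ℝ) :
    -(c ^ 4 / 4) * μ.real s ≤ ∫ x in s, (f x + c) ^ 3 * f x ∂μ := by
  by_cases hf : IntegrableOn (fun x => (f x + c) ^ 3 * f x) s μ
  · have hconst : IntegrableOn (fun _ => -(c ^ 4 / 4)) s μ := integrableOn_const hs.ne
    calc -(c ^ 4 / 4) * μ.real s = ∫ _ in s, -(c ^ 4 / 4) ∂μ := by
          rw [setIntegral_const, smul_eq_mul, mul_comm]
      _ ≤ ∫ x in s, (f x + c) ^ 3 * f x ∂μ :=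
          integral_mono hconst hf fun x => neg_div_four_le_add_pow_three_mul (f x) c
  · -- the integral is the junk value `0`
    rw [integral_undef hf]
    have : 0 ≤ μ.real s := measureReal_nonneg
    nlinarith [pow_two_nonneg (c ^ 2)]

theorem stmt_7_general {d : ℕ} (ε c : ℝ) (hε : 0 < ε)
    (Ω : Set (EuclideanSpace ℝ (Fin d))) (hΩb : Bornology.IsBounded Ω)
    (Cp : ℝ) (hCp : 0 < Cp)
    (hPoin : ∀ ψ : EuclideanSpace ℝ (Fin d) → ℝ, Differentiable ℝ ψ →
      IntegrableOn (fun x => (ψ x)^2) Ω →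
      IntegrableOn (fun x => ‖gradient ψ x‖^2) Ω →
      (∫ x in Ω, ψ x) = 0 →
      (∫ x in Ω, (ψ x)^2) ≤ Cp * ∫ x in Ω, ‖gradient ψ x‖^2) :
    ∃ C₁ > 0, ∃ C₂ ≥ 0, ∀ ψ : EuclideanSpace ℝ (Fin d) → ℝ,
      Differentiable ℝ ψ →
      IntegrableOn (fun x => (ψ x)^2) Ω →
      IntegrableOn (fun x => (ψ x)^4) Ω →
      IntegrableOn (fun x => ‖gradient ψ x‖^2) Ω →
      (∫ x in Ω, ψ x) = 0 →
      C₁ * ((∫ x in Ω, (ψ x)^2) + ∫ x in Ω, ‖gradient ψ x‖^2) - C₂ ≤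
        ε⁻¹ * (∫ x in Ω, (ψ x + c)^3 * ψ x)
          + ε * ∫ x in Ω, ‖gradient ψ x‖^2 := by
  refine ⟨ε / (Cp + 1), by positivity, ε⁻¹ * (c ^ 4 / 4) * volume.real Ω, by positivity,
    ?_⟩
  intro ψ hψ h2 _ hg hmean
  have hpoincare := hPoin ψ hψ h2 hg hmean
  have hgrad : 0 ≤ ∫ x in Ω, ‖gradient ψ x‖ ^ 2 := integral_nonneg fun x => by positivity
  have hquartic :
      -(ε⁻¹ * (c ^ 4 / 4) * volume.real Ω) ≤
        ε⁻¹ * ∫ x in Ω, (ψ x + c) ^ 3 * ψ x := by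
    have := mul_le_mul_of_nonneg_left
      (neg_div_four_mul_measureReal_le_setIntegral_add_pow_three_mul
        (hΩb.measure_lt_top (μ := volume)) ψ c)
      (inv_nonneg.mpr hε.le)
    linarith
  have hH1 : ε / (Cp + 1) * ((∫ x in Ω, ψ x ^ 2) + ∫ x in Ω, ‖gradient ψ x‖ ^ 2) ≤
      ε * ∫ x in Ω, ‖gradient ψ x‖ ^ 2 := by
    rw [div_mul_eq_mul_div, div_le_iff₀ (by positivity)]
    nlinarith [mul_le_mul_of_nonneg_left hpoincare hε.le]
  linarith

/-- Coercivity of the convex-split Cahn–Hilliard operator: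
`⟨S(ψ),ψ⟩ = ε⁻¹∫(ψ+c)³ψ + ε∫|∇ψ|² ≥ C₁‖ψ‖²_{H¹} − C₂` on zero-mean `H¹`
functions over a bounded domain satisfying a Poincaré–Wirtinger inequality. -/
theorem stmt_7 {d : ℕ} (hd1 : 1 ≤ d) (hd3 : d ≤ 3) (ε c : ℝ) (hε : 0 < ε)
    (Ω : Set (EuclideanSpace ℝ (Fin d))) (hΩb : Bornology.IsBounded Ω)
    (hΩm : MeasurableSet Ω) (Cp : ℝ) (hCp : 0 < Cp)
    (hPoin : ∀ ψ : EuclideanSpace ℝ (Fin d) → ℝ, Differentiable ℝ ψ →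
      IntegrableOn (fun x => (ψ x)^2) Ω →
      IntegrableOn (fun x => ‖gradient ψ x‖^2) Ω →
      (∫ x in Ω, ψ x) = 0 →
      (∫ x in Ω, (ψ x)^2) ≤ Cp * ∫ x in Ω, ‖gradient ψ x‖^2) :
    ∃ C₁ > 0, ∃ C₂ ≥ 0, ∀ ψ : EuclideanSpace ℝ (Fin d) → ℝ,
      Differentiable ℝ ψ →
      IntegrableOn (fun x => (ψ x)^2) Ω →
      IntegrableOn (fun x => (ψ x)^4) Ω →
      IntegrableOn (fun x => ‖gradient ψ x‖^2) Ω →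
      (∫ x in Ω, ψ x) = 0 →
      C₁ * ((∫ x in Ω, (ψ x)^2) + ∫ x in Ω, ‖gradient ψ x‖^2) - C₂ ≤
        ε⁻¹ * (∫ x in Ω, (ψ x + c)^3 * ψ x)
          + ε * ∫ x in Ω, ‖gradient ψ x‖^2 :=
  stmt_7_general ε c hε Ω hΩb Cp hCp hPoin
end
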